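/- Let ℱ be a family of subsets of [n], and let 𝒢 be the family obtained from ℱ by one down-shift step at element i: 𝒢 = (ℱ \ ℱᵢ~) ∪ {F \ {i} : F ∈ ℱᵢ~}, where ℱᵢ~ = {F ∈ ℱ : i ∈ F and F \ {i} ∉ ℱ}. Then |𝒢| = |ℱ|, and if a set S ⊆ [n] is k-shattered by 𝒢 then S is k-shattered by ℱ. -/
import Mathlib


/-- `S` is `k`-shattered by `ℋ`. -/
def KShattered {n : ℕ} (ℋ : Finset (Finset (Fin n))) (k : ℕ) (S : Finset (Fin n)) : Prop :=
  ∀ T ⊆ S, k ≤ (ℋ.filter (fun H => H ∩ S = T)).card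

theorem stmt_14 {n : ℕ} (ℱ : Finset (Finset (Fin n))) (i : Fin n) (k : ℕ) :
    letI bad : Finset (Finset (Fin n)) := ℱ.filter (fun F => i ∈ F ∧ F.erase i ∉ ℱ)
    letI 𝒢 : Finset (Finset (Fin n)) := (ℱ \ bad) ∪ bad.image (fun F => F.erase i)
    𝒢.card = ℱ.card ∧
      ∀ S : Finset (Fin n), KShattered 𝒢 k S → KShattered ℱ k S := by
  set bad : Finset (Finset (Fin n)) := ℱ.filter (fun F => i ∈ F ∧ F.erase i ∉ ℱ) with hbad
  set 𝒢 : Finset (Finset (Fin n)) := (ℱ \ bad) ∪ bad.image (fun F => F.erase i) with h𝒢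
  have hbadsub : bad ⊆ ℱ := Finset.filter_subset _ _
  have hinj : Set.InjOn (fun F : Finset (Fin n) => F.erase i) (bad : Set (Finset (Fin n))) := by
    intro F hF F' hF' h
    rw [Finset.mem_coe, hbad, Finset.mem_filter] at hF hF'
    have := congrArg (insert i) h
    simpa [Finset.insert_erase hF.2.1, Finset.insert_erase hF'.2.1] using this
  have hdisj : Disjoint (ℱ \ bad) (bad.image (fun F => F.erase i)) := by
    rw [Finset.disjoint_right]
    intro a ha
    obtain ⟨F, hF, rfl⟩ := Finset.mem_image.mp ha
    have := (Finset.mem_filter.mp hF).2.2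
    simp [Finset.mem_sdiff, this]
  have hG : ∀ G ∈ 𝒢, (G ∈ ℱ ∧ G ∉ bad) ∨ (i ∉ G ∧ insert i G ∈ bad ∧ G ∉ ℱ) := by
    intro G hGm
    rcases Finset.mem_union.mp hGm with h | h
    · exact Or.inl (Finset.mem_sdiff.mp h)
    · obtain ⟨F, hF, rfl⟩ := Finset.mem_image.mp h
      obtain ⟨hFℱ, hiF, hne⟩ := Finset.mem_filter.mp hF
      exact Or.inr ⟨Finset.notMem_erase i F, by rwa [Finset.insert_erase hiF], hne⟩
  constructor
  · rw [Finset.card_union_of_disjoint hdisj, Finset.card_image_of_injOn hinj,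
      Finset.card_sdiff_add_card_eq_card hbadsub]
  · intro S hS T hT
    by_cases hiS : i ∈ S
    · by_cases hiT : i ∈ T
      · refine le_trans (hS T hT) (Finset.card_le_card ?_)
        intro G hGm
        obtain ⟨hG𝒢, hGS⟩ := Finset.mem_filter.mp hGm
        have hiG : i ∈ G := (Finset.mem_inter.mp (hGS ▸ hiT : i ∈ G ∩ S)).1
        rcases hG G hG𝒢 with ⟨hGℱ, _⟩ | ⟨hni, _, _⟩
        · exact Finset.mem_filter.mpr ⟨hGℱ, hGS⟩
        · exact absurd hiG hni
      · refine le_trans (hS (insert i T) (Finset.insert_subset hiS hT))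
          (Finset.card_le_card_of_injOn (fun G => G.erase i) ?_ ?_)
        · intro G hGm
          obtain ⟨hG𝒢, hGS⟩ := Finset.mem_filter.mp hGm
          have hiG : i ∈ G :=
            (Finset.mem_inter.mp (hGS ▸ Finset.mem_insert_self i T : i ∈ G ∩ S)).1
          rcases hG G hG𝒢 with ⟨hGℱ, hGnb⟩ | ⟨hni, _, _⟩
          · have hGe : G.erase i ∈ ℱ := by
              by_contra hc
              exact hGnb (Finset.mem_filter.mpr ⟨hGℱ, hiG, hc⟩)
            refine Finset.mem_filter.mpr ⟨hGe, ?_⟩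
            rw [Finset.erase_inter, hGS, Finset.erase_insert hiT]
          · exact absurd hiG hni
        · intro G₁ h₁ G₂ h₂ h
          have hi₁ : i ∈ G₁ := by
            have := (Finset.mem_filter.mp h₁).2
            exact (Finset.mem_inter.mp (this ▸ Finset.mem_insert_self i T : i ∈ G₁ ∩ S)).1
          have hi₂ : i ∈ G₂ := by
            have := (Finset.mem_filter.mp h₂).2
            exact (Finset.mem_inter.mp (this ▸ Finset.mem_insert_self i T : i ∈ G₂ ∩ S)).1
          have := congrArg (insert i) h
          simpa [Finset.insert_erase hi₁, Finset.insert_erase hi₂] using this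
    · refine le_trans (hS T hT)
        (Finset.card_le_card_of_injOn (fun G => if G ∈ ℱ then G else insert i G) ?_ ?_)
      · intro G hGm
        obtain ⟨hG𝒢, hGS⟩ := Finset.mem_filter.mp hGm
        by_cases hGF : G ∈ ℱ
        · simp only [hGF, if_pos]
          exact Finset.mem_filter.mpr ⟨hGF, hGS⟩
        · simp only [hGF, if_neg, if_false]
          rcases hG G hG𝒢 with ⟨hGℱ, _⟩ | ⟨hni, hb, _⟩
          · exact absurd hGℱ hGF
          · refine Finset.mem_filter.mpr ⟨hbadsub hb, ?_⟩
            rw [Finset.insert_inter_of_notMem hiS, hGS]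
      · intro G₁ h₁ G₂ h₂ h
        simp only at h
        have m₁ := (Finset.mem_filter.mp h₁).1
        have m₂ := (Finset.mem_filter.mp h₂).1
        by_cases hF₁ : G₁ ∈ ℱ <;> by_cases hF₂ : G₂ ∈ ℱ
        · simpa [hF₁, hF₂] using h
        · exfalso
          rw [if_pos hF₁, if_neg hF₂] at h
          rcases hG G₁ m₁ with ⟨_, hnb₁⟩ | ⟨_, _, hn₁⟩
          · rcases hG G₂ m₂ with ⟨hF₂', _⟩ | ⟨_, hb₂, _⟩
            · exact hF₂ hF₂'
            · exact hnb₁ (h ▸ hb₂)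
          · exact hn₁ hF₁
        · exfalso
          rw [if_neg hF₁, if_pos hF₂] at h
          rcases hG G₂ m₂ with ⟨_, hnb₂⟩ | ⟨_, _, hn₂⟩
          · rcases hG G₁ m₁ with ⟨hF₁', _⟩ | ⟨_, hb₁, _⟩
            · exact hF₁ hF₁'
            · exact hnb₂ (h ▸ hb₁)
          · exact hn₂ hF₂
        · rw [if_neg hF₁, if_neg hF₂] at h
          rcases hG G₁ m₁ with ⟨hF₁', _⟩ | ⟨hni₁, _, _⟩
          · exact absurd hF₁' hF₁
          · rcases hG G₂ m₂ with ⟨hF₂', _⟩ | ⟨hni₂, _, _⟩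
            · exact absurd hF₂' hF₂
            · have := congrArg (fun s => Finset.erase s i) h
              simpa [Finset.erase_insert hni₁, Finset.erase_insert hni₂] using this
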